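/- Let C be a closed cone in a real Banach space X and let f : C → C be an order-preserving homogeneous map. If x and y are eigenvectors of f in C lying in the same part of C, i.e., f(x) = λx, f(y) = μy with x, y ∈ C \ {0}, λ, μ ≥ 0, and x ∼_C y, then λ = μ. -/

import Mathlib

/-!
If `x ≤ β y` and `y ≤ α x`, applying the order-preserving homogeneous map `f` `n` times gives
`λⁿ x ≤ β μⁿ y ≤ α β μⁿ x`. Were `λ > μ`, for large `n` the coefficient `α β μⁿ - λⁿ` would be
negative, so both `x` and `-x` would lie in `C`, forcing `x = 0`. By symmetry `λ = μ`.
-/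

open Filter Topology Set

noncomputable section

variable {X : Type*} [NormedAddCommGroup X] [NormedSpace ℝ X] [CompleteSpace X]

/-- `C` is a closed cone in `X`: closed, convex, invariant under nonnegative scaling,
and `C ∩ (-C) = {0}`. -/
def IsClosedCone (C : Set X) : Prop :=
  IsClosed C ∧ Convex ℝ C ∧ (∀ a : ℝ, 0 ≤ a → ∀ x ∈ C, a • x ∈ C) ∧
    ∀ x ∈ C, -x ∈ C → x = 0

/-- The partial order induced by the cone `C`: `x ≤ y` iff `y - x ∈ C`. -/
def coneLE (C : Set X) (x y : X) : Prop := y - x ∈ C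

/-- `f` is homogeneous of degree one on `C`. -/
def IsHomog (C : Set X) (f : X → X) : Prop :=
  ∀ a : ℝ, 0 ≤ a → ∀ x ∈ C, f (a • x) = a • f x

/-- `f` is order-preserving on `C` with respect to the cone order. -/
def IsOrdPres (C : Set X) (f : X → X) : Prop :=
  ∀ x ∈ C, ∀ y ∈ C, coneLE C x y → coneLE C (f x) (f y)

/-- `f` is a compact map on `C`: the image of every bounded subset of `C`
has compact closure. -/
def IsCompactMapOn (C : Set X) (f : X → X) : Prop :=
  ∀ D : Set X, D ⊆ C → Bornology.IsBounded D → IsCompact (closure (f '' D))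

/-- The cone sup-norm `‖g‖_C = sup {‖g x‖ : x ∈ C, ‖x‖ ≤ 1}`. -/
def coneNorm (C : Set X) (g : X → X) : ℝ :=
  sSup {r : ℝ | ∃ x ∈ C, ‖x‖ ≤ 1 ∧ r = ‖g x‖}

/-- The cone spectral radius `r_C(f) = sup_{x ∈ C} limsup_k ‖f^k(x)‖^{1/k}`. -/
def coneSpecRad (C : Set X) (f : X → X) : ℝ :=
  sSup {r : ℝ | ∃ x ∈ C, r = Filter.limsup (fun k : ℕ => ‖f^[k] x‖ ^ ((k : ℝ)⁻¹)) Filter.atTop}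

/-- The cone spectrum `σ_C(f) = {ρ ≥ 0 : f x = ρ • x for some x ∈ C, x ≠ 0}`. -/
def coneSpectrum (C : Set X) (f : X → X) : Set ℝ :=
  {ρ : ℝ | 0 ≤ ρ ∧ ∃ x ∈ C, x ≠ 0 ∧ f x = ρ • x}

/-- `f` has a continuous cone spectral radius: for every sequence of continuous compact
order-preserving homogeneous maps `f_k : C → C` with `‖f - f_k‖_C → 0`,
one has `r_C(f_k) → r_C(f)`. -/
def HasContinuousConeSpecRad (C : Set X) (f : X → X) : Prop :=
  ∀ fk : ℕ → X → X,
    (∀ k, Set.MapsTo (fk k) C C) →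
    (∀ k, ContinuousOn (fk k) C) →
    (∀ k, IsCompactMapOn C (fk k)) →
    (∀ k, IsHomog C (fk k)) →
    (∀ k, IsOrdPres C (fk k)) →
    Filter.Tendsto (fun k => coneNorm C (fun x => f x - fk k x)) Filter.atTop (nhds 0) →
    Filter.Tendsto (fun k => coneSpecRad C (fk k)) Filter.atTop (nhds (coneSpecRad C f))

/-- `y` dominates `x` in the cone `C`: there exists `β > 0` with `x ≤ β • y`. -/
def Dominates (C : Set X) (y x : X) : Prop := ∃ β : ℝ, 0 < β ∧ coneLE C x (β • y)

/-- `x ∼_C y`: `x` and `y` lie in the same part of `C`. -/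
def SamePart (C : Set X) (x y : X) : Prop := Dominates C y x ∧ Dominates C x y

end

section

variable {X : Type*} [NormedAddCommGroup X] [NormedSpace ℝ X] {C : Set X}

namespace IsClosedCone

theorem smul_mem (hC : IsClosedCone C) {a : ℝ} (ha : 0 ≤ a) {x : X} (hx : x ∈ C) : a • x ∈ C :=
  hC.2.2.1 a ha x hx

theorem add_mem (hC : IsClosedCone C) {x y : X} (hx : x ∈ C) (hy : y ∈ C) : x + y ∈ C := by
  have hmid : (2⁻¹ : ℝ) • x + (2⁻¹ : ℝ) • y ∈ C :=
    hC.2.1 hx hy (by norm_num) (by norm_num) (by norm_num)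
  have hscaled := hC.smul_mem zero_le_two hmid
  rwa [smul_add, smul_smul, smul_smul, mul_inv_cancel₀ two_ne_zero, one_smul, one_smul]
    at hscaled

theorem coneLE_trans (hC : IsClosedCone C) {x y z : X} (hxy : coneLE C x y) (hyz : coneLE C y z) :
    coneLE C x z := by
  have h := hC.add_mem hyz hxy
  rwa [sub_add_sub_cancel] at h

theorem coneLE_smul (hC : IsClosedCone C) {a : ℝ} (ha : 0 ≤ a) {x y : X} (h : coneLE C x y) :
    coneLE C (a • x) (a • y) := by
  unfold coneLE
  rw [← smul_sub]
  exact hC.smul_mem ha h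

theorem eq_zero_of_smul_le_smul (hC : IsClosedCone C) {x : X} (hx : x ∈ C) {a b : ℝ}
    (hba : b < a) (h : coneLE C (a • x) (b • x)) : x = 0 := by
  have hpos : (a - b) • x ∈ C := hC.smul_mem (sub_nonneg.2 hba.le) hx
  have hneg : -((a - b) • x) ∈ C := by rwa [← neg_smul, neg_sub, sub_smul]
  exact (smul_eq_zero.1 (hC.2.2.2 _ hpos hneg)).resolve_left (sub_ne_zero.2 hba.ne')

end IsClosedCone

variable {f : X → X} {x y : X} {lam mu : ℝ}

theorem coneLE_smul_mul_of_eigen (hC : IsClosedCone C) (hfhom : IsHomog C f)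
    (hford : IsOrdPres C f) (hx : x ∈ C) (hy : y ∈ C) (hfx : f x = lam • x) (hfy : f y = mu • y)
    {c d : ℝ} (hc : 0 ≤ c) (hd : 0 ≤ d) (h : coneLE C (c • x) (d • y)) :
    coneLE C ((c * lam) • x) ((d * mu) • y) := by
  have hf := hford _ (hC.smul_mem hc hx) _ (hC.smul_mem hd hy) h
  rwa [hfhom c hc x hx, hfhom d hd y hy, hfx, hfy, smul_smul, smul_smul] at hf

theorem coneLE_pow_smul_of_eigen (hC : IsClosedCone C) (hfhom : IsHomog C f)
    (hford : IsOrdPres C f) (hx : x ∈ C) (hy : y ∈ C) (hfx : f x = lam • x) (hfy : f y = mu • y)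
    (hlam : 0 ≤ lam) (hmu : 0 ≤ mu) {β : ℝ} (hβ : 0 ≤ β) (h : coneLE C x (β • y)) (n : ℕ) :
    coneLE C (lam ^ n • x) ((β * mu ^ n) • y) := by
  induction n with
  | zero => simpa using h
  | succ n ih =>
    rw [pow_succ, pow_succ, ← mul_assoc]
    exact coneLE_smul_mul_of_eigen hC hfhom hford hx hy hfx hfy (pow_nonneg hlam n)
      (by positivity) ih

theorem eigenvalue_le_of_samePart (hC : IsClosedCone C) (hfhom : IsHomog C f)
    (hford : IsOrdPres C f) (hx : x ∈ C) (hy : y ∈ C) (hx0 : x ≠ 0)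
    (hlam : 0 ≤ lam) (hmu : 0 ≤ mu) (hfx : f x = lam • x) (hfy : f y = mu • y)
    (hpart : SamePart C x y) : lam ≤ mu := by
  obtain ⟨⟨β, hβ, hxy⟩, ⟨α, hα, hyx⟩⟩ := hpart
  by_contra! hlt
  have hlam0 : 0 < lam := hmu.trans_lt hlt
  obtain ⟨n, hn⟩ : ∃ n : ℕ, (mu / lam) ^ n < (β * α)⁻¹ :=
    exists_pow_lt_of_lt_one (by positivity) ((div_lt_one hlam0).2 hlt)
  have hcoeff : β * mu ^ n * α < lam ^ n := by
    rw [div_pow, div_lt_iff₀ (by positivity), lt_inv_mul_iff₀ (by positivity)] at hn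
    linarith
  have hchain : coneLE C (lam ^ n • x) ((β * mu ^ n * α) • x) := by
    refine hC.coneLE_trans (coneLE_pow_smul_of_eigen hC hfhom hford hx hy hfx hfy hlam hmu
      hβ.le hxy n) ?_
    rw [mul_smul _ α]
    exact hC.coneLE_smul (by positivity) hyx
  exact hx0 (hC.eq_zero_of_smul_le_smul hx hcoeff hchain)

end

variable {X : Type*} [NormedAddCommGroup X] [NormedSpace ℝ X] [CompleteSpace X]

theorem eigenvalues_eq_of_samePart_general
    (C : Set X) (hC : IsClosedCone C) (f : X → X)
    (hfhom : IsHomog C f) (hford : IsOrdPres C f)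
    (x y : X) (hx : x ∈ C) (hy : y ∈ C) (hx0 : x ≠ 0) (hy0 : y ≠ 0)
    (lam mu : ℝ) (hlam : 0 ≤ lam) (hmu : 0 ≤ mu)
    (hfx : f x = lam • x) (hfy : f y = mu • y)
    (hpart : SamePart C x y) :
    lam = mu :=
  le_antisymm (eigenvalue_le_of_samePart hC hfhom hford hx hy hx0 hlam hmu hfx hfy hpart)
    (eigenvalue_le_of_samePart hC hfhom hford hy hx hy0 hmu hlam hfy hfx ⟨hpart.2, hpart.1⟩)

/-- If `f : C → C` is an order-preserving homogeneous map on a closed cone `C` and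
`x, y ∈ C \ {0}` are eigenvectors of `f` lying in the same part of `C`, then the
corresponding eigenvalues are equal. -/
theorem eigenvalues_eq_of_samePart
    (C : Set X) (hC : IsClosedCone C) (f : X → X)
    (hfC : Set.MapsTo f C C) (hfhom : IsHomog C f) (hford : IsOrdPres C f)
    (x y : X) (hx : x ∈ C) (hy : y ∈ C) (hx0 : x ≠ 0) (hy0 : y ≠ 0)
    (lam mu : ℝ) (hlam : 0 ≤ lam) (hmu : 0 ≤ mu)
    (hfx : f x = lam • x) (hfy : f y = mu • y)
    (hpart : SamePart C x y) :
    lam = mu :=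
  eigenvalues_eq_of_samePart_general C hC f hfhom hford x y hx hy hx0 hy0 lam mu hlam hmu hfx hfy
    hpart
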